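/- There is an absolute constant c such that for all natural numbers n ≥ 1, b ≥ 2, and k ≥ 1, every function f : ({0,1}^n) × ({0,1}^n) → {0,1} that admits a (b, k) bit-probe scheme is computed by a Boolean circuit with 2n inputs of size at most c · (2^n · k · log₂ b + 2^n · b + 2^k · 2^n). -/

import Mathlib

inductive GateLabel where
  | and | or | not
deriving DecidableEq

/-- A Boolean circuit with `m` inputs: a sequence of gates, each labeled ∧, ∨ (fan-in 2)
or ¬ (fan-in 1), taking inputs from among the `m` input variables and earlier gates
(wire `w < m` is input variable `w`; wire `m + g` is gate `g`); one gate is the output gate. -/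
structure Circuit (m : ℕ) where
  size : ℕ
  label : Fin size → GateLabel
  in1 : (g : Fin size) → Fin (m + g.val)
  in2 : (g : Fin size) → Fin (m + g.val)
  out : Fin size

namespace Circuit

/-- The value carried on wire `w` when the circuit is evaluated on input `x`. -/
def wire {m : ℕ} (C : Circuit m) (x : Fin m → Bool) (w : ℕ) (hw : w < m + C.size) : Bool :=
  if h : w < m then x ⟨w, h⟩
  else
    have hg : w - m < C.size := by omega
    have h1 : ((C.in1 ⟨w - m, hg⟩ : Fin _) : ℕ) < w := by
      have := (C.in1 ⟨w - m, hg⟩).isLt; simp only [Fin.val_mk] at this; omega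
    have h2 : ((C.in2 ⟨w - m, hg⟩ : Fin _) : ℕ) < w := by
      have := (C.in2 ⟨w - m, hg⟩).isLt; simp only [Fin.val_mk] at this; omega
    match C.label ⟨w - m, hg⟩ with
    | .not => !(C.wire x (C.in1 ⟨w - m, hg⟩) (by omega))
    | .and => (C.wire x (C.in1 ⟨w - m, hg⟩) (by omega)) && (C.wire x (C.in2 ⟨w - m, hg⟩) (by omega))
    | .or => (C.wire x (C.in1 ⟨w - m, hg⟩) (by omega)) || (C.wire x (C.in2 ⟨w - m, hg⟩) (by omega))
termination_by w

/-- The output of the circuit on input `x`. -/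
def eval {m : ℕ} (C : Circuit m) (x : Fin m → Bool) : Bool :=
  C.wire x (m + C.out.val) (by omega)

end Circuit

/-- A `(b, k)` bit-probe scheme for `f : {0,1}^n × {0,1}^n → {0,1}`: an encoding
`G : {0,1}^n → {0,1}^b`, a probe map `H` assigning to each query `y` a list of `k`
positions in the encoding, and a decoder `φ`, such that for all `x, y`, `f (x, y)` equals
`φ` applied to the `k` probed bits of `G x` (at positions `H y`) and the query `y`. -/
def HasProbeScheme {n : ℕ} (b k : ℕ) (f : (Fin n → Bool) × (Fin n → Bool) → Bool) : Prop :=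
  ∃ (G : (Fin n → Bool) → (Fin b → Bool)) (H : (Fin n → Bool) → (Fin k → Fin b))
    (φ : (Fin k → Bool) → (Fin n → Bool) → Bool),
    ∀ x y : Fin n → Bool, f (x, y) = φ (fun j => G x (H y j)) y

/-- The `2n`-bit input obtained by concatenating `x` and `y`. -/
def joinInput {n : ℕ} (x y : Fin n → Bool) : Fin (2 * n) → Bool := fun i =>
  if h : (i : ℕ) < n then x ⟨i, h⟩ else y ⟨(i : ℕ) - n, by have := i.isLt; omega⟩

/-!
Evaluate the probe scheme with multiplexer trees. A tree over `p` selector wires whose leaves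
are wires carrying `g v` (`v : Fin p → Bool`) computes `g (selectors)` with `4 (2^p - 1)` gates.
Such trees compute in turn: every bit `G(x)_i`, selecting on `x` among constant leaves; every
probed bit `G(x)_{H(y)_j}`, selecting on `y` among the bits of `G(x)`; the decoder's answer
`φ(z, y')` for every query `y'`, selecting on the probed bits `z` among constant leaves; and
finally the answer for the actual query, selecting on `y`. All wires are shared in one circuit,
which has `O(2^n (b + k + 2^k))` gates, and `k ≤ k log₂ b` since `b ≥ 2`.
-/

def GateLabel.apply : GateLabel → Bool → Bool → Bool
  | .and, a, b => a && b
  | .or, a, b => a || b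
  | .not, a, _ => !a

namespace Circuit

variable {m : ℕ}

theorem wire_of_lt (C : Circuit m) (x : Fin m → Bool) {w : ℕ} (hw : w < m + C.size)
    (h : w < m) : C.wire x w hw = x ⟨w, h⟩ := by
  rw [wire]; simp [h]

theorem wire_of_not_lt (C : Circuit m) (x : Fin m → Bool) {w : ℕ} (hw : w < m + C.size)
    (h : ¬ w < m) :
    C.wire x w hw = (C.label ⟨w - m, by omega⟩).apply
      (C.wire x (C.in1 ⟨w - m, by omega⟩) (by omega))
      (C.wire x (C.in2 ⟨w - m, by omega⟩) (by omega)) := by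
  rw [wire, dif_neg h]
  dsimp only
  split <;> next hl => rw [hl]; rfl

def snoc (C : Circuit m) (l : GateLabel) (a b : Fin (m + C.size)) : Circuit m where
  size := C.size + 1
  label := Fin.lastCases l C.label
  in1 := Fin.lastCases a C.in1
  in2 := Fin.lastCases b C.in2
  out := Fin.last C.size

section Snoc

variable (C : Circuit m) (l : GateLabel) (a b : Fin (m + C.size))

theorem size_snoc : (C.snoc l a b).size = C.size + 1 := rfl

theorem snoc_label_of_lt {g : ℕ} (hg : g < C.size) :
    (C.snoc l a b).label ⟨g, by rw [size_snoc]; omega⟩ = C.label ⟨g, hg⟩ :=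
  Fin.lastCases_castSucc (motive := fun _ => GateLabel) ⟨g, hg⟩

theorem snoc_in1_of_lt {g : ℕ} (hg : g < C.size) :
    (C.snoc l a b).in1 ⟨g, by rw [size_snoc]; omega⟩ = C.in1 ⟨g, hg⟩ :=
  Fin.lastCases_castSucc (motive := fun i => Fin (m + i)) ⟨g, hg⟩

theorem snoc_in2_of_lt {g : ℕ} (hg : g < C.size) :
    (C.snoc l a b).in2 ⟨g, by rw [size_snoc]; omega⟩ = C.in2 ⟨g, hg⟩ :=
  Fin.lastCases_castSucc (motive := fun i => Fin (m + i)) ⟨g, hg⟩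

theorem wire_snoc (x : Fin m → Bool) {w : ℕ} (hw : w < m + C.size) :
    (C.snoc l a b).wire x w (by rw [size_snoc]; omega) = C.wire x w hw := by
  induction w using Nat.strong_induction_on with
  | _ w ih =>
    by_cases h : w < m
    · rw [wire_of_lt _ _ _ h, wire_of_lt _ _ _ h]
    have hg : w - m < C.size := by omega
    rw [wire_of_not_lt _ _ _ h, wire_of_not_lt _ _ _ h]
    simp only [C.snoc_label_of_lt l a b hg, C.snoc_in1_of_lt l a b hg,
      C.snoc_in2_of_lt l a b hg]
    rw [ih _ (by omega), ih _ (by omega)]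

theorem snoc_label_of_eq {g : ℕ} (hg : g = C.size) :
    (C.snoc l a b).label ⟨g, by rw [size_snoc]; omega⟩ = l := by
  subst hg; exact Fin.lastCases_last (motive := fun _ => GateLabel)

theorem snoc_in1_of_eq {g : ℕ} (hg : g = C.size) :
    ((C.snoc l a b).in1 ⟨g, by rw [size_snoc]; omega⟩ : ℕ) = a := by
  subst hg; exact congrArg Fin.val (Fin.lastCases_last (motive := fun i => Fin (m + i)))

theorem snoc_in2_of_eq {g : ℕ} (hg : g = C.size) :
    ((C.snoc l a b).in2 ⟨g, by rw [size_snoc]; omega⟩ : ℕ) = b := by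
  subst hg; exact congrArg Fin.val (Fin.lastCases_last (motive := fun i => Fin (m + i)))

theorem wire_snoc_last (x : Fin m → Bool) :
    (C.snoc l a b).wire x (m + C.size) (by rw [size_snoc]; omega) =
      l.apply (C.wire x a a.2) (C.wire x b b.2) := by
  have hg : m + C.size - m = C.size := by omega
  rw [wire_of_not_lt _ _ _ (by omega)]
  simp only [C.snoc_label_of_eq l a b hg, C.snoc_in1_of_eq l a b hg,
    C.snoc_in2_of_eq l a b hg]
  rw [C.wire_snoc l a b x a.2, C.wire_snoc l a b x b.2]

end Snoc

def Computes (C : Circuit m) (f : (Fin m → Bool) → Bool) : Prop :=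
  ∃ (w : ℕ) (hw : w < m + C.size), ∀ x, C.wire x w hw = f x

theorem Computes.snoc {C : Circuit m} {f : (Fin m → Bool) → Bool} (hf : C.Computes f)
    (l : GateLabel) (a b : Fin (m + C.size)) : (C.snoc l a b).Computes f := by
  obtain ⟨w, hw, hwf⟩ := hf
  exact ⟨w, by rw [size_snoc]; omega, fun x => (wire_snoc C l a b x hw).trans (hwf x)⟩

theorem computes_snoc_last (C : Circuit m) (l : GateLabel) (a b : Fin (m + C.size)) :
    (C.snoc l a b).Computes fun x => l.apply (C.wire x a a.2) (C.wire x b b.2) :=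
  ⟨m + C.size, by rw [size_snoc]; omega, wire_snoc_last C l a b⟩

def Realizable (m s : ℕ) (F : Set ((Fin m → Bool) → Bool)) : Prop :=
  ∃ C : Circuit m, C.size ≤ s ∧ ∀ f ∈ F, C.Computes f

namespace Realizable

variable {s : ℕ} {F : Set ((Fin m → Bool) → Bool)}

theorem mono {t : ℕ} {F' : Set ((Fin m → Bool) → Bool)} (h : Realizable m s F) (hst : s ≤ t)
    (hF : F' ⊆ F) : Realizable m t F' :=
  let ⟨C, hC, hCF⟩ := h
  ⟨C, hC.trans hst, fun f hf => hCF f (hF hf)⟩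

-- A circuit has at least one gate, its output, so a dummy gate is needed.
theorem inputs (hm : 0 < m) : Realizable m 1 (Set.range fun i (x : Fin m → Bool) => x i) := by
  refine ⟨⟨1, fun _ => .not, fun _ => ⟨0, by omega⟩, fun _ => ⟨0, by omega⟩, 0⟩, le_rfl, ?_⟩
  rintro _ ⟨i, rfl⟩
  exact ⟨i, by omega, fun x => wire_of_lt _ _ _ i.2⟩

theorem gate {f g : (Fin m → Bool) → Bool} (h : Realizable m s F) (l : GateLabel) (hf : f ∈ F)
    (hg : g ∈ F) : Realizable m (s + 1) (insert (fun x => l.apply (f x) (g x)) F) := by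
  obtain ⟨C, hC, hCF⟩ := h
  obtain ⟨a, ha, haf⟩ := hCF f hf
  obtain ⟨b, hb, hbg⟩ := hCF g hg
  refine ⟨C.snoc l ⟨a, ha⟩ ⟨b, hb⟩, by rw [size_snoc]; omega, ?_⟩
  rintro f' (rfl | hf')
  · simpa only [haf, hbg] using C.computes_snoc_last l ⟨a, ha⟩ ⟨b, hb⟩
  · exact (hCF f' hf').snoc ..

-- The output of a circuit is a gate, whereas `f` may sit on an input wire.
theorem exists_circuit {f : (Fin m → Bool) → Bool} (h : Realizable m s F) (hf : f ∈ F) :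
    ∃ C : Circuit m, C.size ≤ s + 1 ∧ ∀ x, C.eval x = f x := by
  obtain ⟨C, hC, hCF⟩ := h
  obtain ⟨w, hw, hwf⟩ := hCF f hf
  refine ⟨C.snoc .and ⟨w, hw⟩ ⟨w, hw⟩, by rw [size_snoc]; omega, fun x => ?_⟩
  rw [eval, ← Bool.and_self (f x), ← hwf x]
  exact wire_snoc_last ..

theorem union_consts {f : (Fin m → Bool) → Bool} (h : Realizable m s F) (hf : f ∈ F) :
    Realizable m (s + 3) (F ∪ Set.range fun c _ => c) := by
  have hnot := h.gate .not hf hf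
  have hfalse := hnot.gate .and (Set.mem_insert_of_mem _ hf) (Set.mem_insert _ _)
  have htrue := hfalse.gate .not (Set.mem_insert _ _) (Set.mem_insert _ _)
  refine htrue.mono le_rfl ?_
  rintro g (hg | ⟨_ | _, rfl⟩)
  · exact .inr (.inr (.inr hg))
  · exact .inr (.inl (by funext x; simp [GateLabel.apply]))
  · exact .inl (by funext x; simp [GateLabel.apply])

theorem mux {c f₀ f₁ : (Fin m → Bool) → Bool} (h : Realizable m s F) (hc : c ∈ F) (h₀ : f₀ ∈ F)
    (h₁ : f₁ ∈ F) : Realizable m (s + 4) (insert (fun x => bif c x then f₁ x else f₀ x) F) := by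
  have hnot := h.gate .not hc hc
  have hlo := hnot.gate .and (Set.mem_insert _ _) (Set.mem_insert_of_mem _ h₀)
  have hhi := hlo.gate .and (Set.mem_insert_of_mem _ (Set.mem_insert_of_mem _ hc))
    (Set.mem_insert_of_mem _ (Set.mem_insert_of_mem _ h₁))
  have hor := hhi.gate .or (Set.mem_insert_of_mem _ (Set.mem_insert _ _)) (Set.mem_insert _ _)
  refine hor.mono le_rfl (Set.insert_subset ?_ ?_)
  · left; funext x; cases c x <;> simp [GateLabel.apply]
  · intro g hg; simp [hg]

theorem select {n : ℕ} (sel : Fin n → (Fin m → Bool) → Bool)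
    (g : (Fin n → Bool) → (Fin m → Bool) → Bool) (h : Realizable m s F) (hsel : ∀ i, sel i ∈ F)
    (hg : ∀ v, g v ∈ F) :
    Realizable m (s + 4 * (2 ^ n - 1)) (insert (fun x => g (fun i => sel i x) x) F) := by
  induction n generalizing s F with
  | zero =>
    have hconst : (fun x => g (fun i => sel i x) x) = g Fin.elim0 := by
      funext x; congr; funext i; exact i.elim0
    exact h.mono (by simp) (Set.insert_subset (hconst ▸ hg _) subset_rfl)
  | succ n ih =>
    have h₀ := ih (fun i => sel i.succ) (fun v => g (Fin.cons false v)) h (fun i => hsel _)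
      (fun v => hg _)
    have h₁ := ih (fun i => sel i.succ) (fun v => g (Fin.cons true v)) h₀
      (fun i => Set.mem_insert_of_mem _ (hsel _)) (fun v => Set.mem_insert_of_mem _ (hg _))
    have hmux := h₁.mux (Set.mem_insert_of_mem _ (Set.mem_insert_of_mem _ (hsel 0)))
      (Set.mem_insert_of_mem _ (Set.mem_insert _ _)) (Set.mem_insert _ _)
    refine hmux.mono ?_ (Set.insert_subset ?_ ?_)
    · have := Nat.one_le_two_pow (n := n)
      rw [pow_succ]
      omega
    · left
      funext x
      rw [← Fin.cons_self_tail (fun i => sel i x)]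
      cases sel 0 x <;> rfl
    · exact fun f hf => .inr (.inr (.inr hf))

theorem union_range {ι : Type*} [Fintype ι] {S : ℕ} (h : Realizable m s F)
    (f : ι → (Fin m → Bool) → Bool)
    (step : ∀ i t F', F ⊆ F' → Realizable m t F' → Realizable m (t + S) (insert (f i) F')) :
    Realizable m (s + Fintype.card ι * S) (F ∪ Set.range f) := by
  classical
  suffices ∀ u : Finset ι, Realizable m (s + u.card * S) (F ∪ f '' u) by
    simpa using this Finset.univ
  intro u
  induction u using Finset.induction_on with
  | empty => simpa using h
  | insert i u hi ih =>
    refine (step i _ _ Set.subset_union_left ih).mono ?_ ?_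
    · rw [Finset.card_insert_of_notMem hi]
      linarith
    · rw [Finset.coe_insert, Set.image_insert_eq]
      intro g
      simp only [Set.mem_union, Set.mem_insert_iff]
      tauto

end Realizable

end Circuit

def leftHalf {n : ℕ} (z : Fin (2 * n) → Bool) : Fin n → Bool := fun i => z ⟨i, by omega⟩

def rightHalf {n : ℕ} (z : Fin (2 * n) → Bool) : Fin n → Bool := fun i => z ⟨n + i, by omega⟩

theorem leftHalf_joinInput {n : ℕ} (x y : Fin n → Bool) : leftHalf (joinInput x y) = x := by
  funext i
  simp [leftHalf, joinInput]

theorem rightHalf_joinInput {n : ℕ} (x y : Fin n → Bool) : rightHalf (joinInput x y) = y := by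
  funext i
  simp [rightHalf, joinInput]

theorem realizable_probe_decoder {n b k : ℕ} (hn : 0 < n) (G : (Fin n → Bool) → Fin b → Bool)
    (H : (Fin n → Bool) → Fin k → Fin b) (φ : (Fin k → Bool) → (Fin n → Bool) → Bool) :
    Circuit.Realizable (2 * n) (4 * 2 ^ n * (b + k + 2 ^ k + 1) + 4)
      {fun z => φ (fun j => G (leftHalf z) (H (rightHalf z) j)) (rightHalf z)} := by
  set X : Fin n → (Fin (2 * n) → Bool) → Bool := fun i z => leftHalf z i
  set Y : Fin n → (Fin (2 * n) → Bool) → Bool := fun i z => rightHalf z i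
  set F₀ := (Set.range fun i (z : Fin (2 * n) → Bool) => z i) ∪ Set.range fun c _ => c
  have hX : ∀ i, X i ∈ F₀ := fun i => .inl ⟨_, rfl⟩
  have hY : ∀ i, Y i ∈ F₀ := fun i => .inl ⟨_, rfl⟩
  have hconst : ∀ c, (fun _ => c) ∈ F₀ := fun c => .inr ⟨c, rfl⟩
  have hbase : Circuit.Realizable (2 * n) 4 F₀ :=
    (Circuit.Realizable.inputs (by omega)).union_consts ⟨⟨0, by omega⟩, rfl⟩
  have hcode := hbase.union_range (fun i z => G (leftHalf z) i) fun i _ _ hF h =>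
    h.select X (fun v _ => G v i) (fun i => hF (hX i)) (fun v => hF (hconst _))
  have hprobes := hcode.union_range (fun j z => G (leftHalf z) (H (rightHalf z) j)) fun j _ _ hF h =>
    h.select Y (fun v z => G (leftHalf z) (H v j)) (fun i => hF (.inl (hY i)))
      (fun v => hF (.inr ⟨_, rfl⟩))
  have hanswers := hprobes.union_range (fun y z => φ (fun j => G (leftHalf z) (H (rightHalf z) j)) y)
    fun y _ _ hF h => h.select (fun j z => G (leftHalf z) (H (rightHalf z) j)) (fun v _ => φ v y)
      (fun j => hF (.inr ⟨j, rfl⟩)) (fun v => hF (.inl (.inl (hconst _))))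
  have hout := hanswers.select Y (fun y z => φ (fun j => G (leftHalf z) (H (rightHalf z) j)) y)
    (fun i => .inl (.inl (.inl (hY i)))) (fun y => .inr ⟨y, rfl⟩)
  refine hout.mono ?_ (Set.singleton_subset_iff.2 (Set.mem_insert _ _))
  simp only [Fintype.card_fin, Fintype.card_fun, Fintype.card_bool]
  calc _ ≤ 4 + b * (4 * 2 ^ n) + k * (4 * 2 ^ n) + 2 ^ n * (4 * 2 ^ k) + 4 * 2 ^ n := by
        gcongr <;> exact Nat.sub_le _ _
    _ = _ := by ring

/-- There is an absolute constant `c` such that for all `n ≥ 1`, `b ≥ 2`, `k ≥ 1`, every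
function `f : {0,1}^n × {0,1}^n → {0,1}` admitting a `(b, k)` bit-probe scheme is computed
by a Boolean circuit with `2n` inputs of size at most
`c · (2^n · k · log₂ b + 2^n · b + 2^k · 2^n)`. -/
theorem probe_scheme_to_circuit : ∃ c : ℝ, ∀ n b k : ℕ, 1 ≤ n → 2 ≤ b → 1 ≤ k →
    ∀ f : (Fin n → Bool) × (Fin n → Bool) → Bool, HasProbeScheme b k f →
      ∃ C : Circuit (2 * n),
        (C.size : ℝ) ≤ c * ((2 : ℝ) ^ n * k * Real.logb 2 b + 2 ^ n * b + 2 ^ k * 2 ^ n) ∧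
        ∀ x y : Fin n → Bool, C.eval (joinInput x y) = f (x, y) := by
  refine ⟨6, fun n b k hn hb hk f ⟨G, H, φ, hf⟩ => ?_⟩
  obtain ⟨C, hC, hCf⟩ := (realizable_probe_decoder hn G H φ).exists_circuit rfl
  refine ⟨C, ?_, fun x y => by rw [hCf, hf, leftHalf_joinInput, rightHalf_joinInput]⟩
  have hlog : 1 ≤ Real.logb 2 b := by
    rw [Real.le_logb_iff_rpow_le one_lt_two (by positivity)]
    exact_mod_cast (by simpa using hb)
  have hsize : C.size ≤ 6 * (2 ^ n * k + 2 ^ n * b + 2 ^ k * 2 ^ n) := by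
    have h2k : 2 ≤ 2 ^ k := Nat.le_self_pow (by omega) 2
    nlinarith [Nat.mul_le_mul_left (2 ^ n) (show 5 ≤ k + b + 2 ^ k by omega),
      Nat.one_le_two_pow (n := n)]
  calc (C.size : ℝ) ≤ 6 * ((2 : ℝ) ^ n * k + 2 ^ n * b + 2 ^ k * 2 ^ n) := by exact_mod_cast hsize
    _ ≤ 6 * ((2 : ℝ) ^ n * k * Real.logb 2 b + 2 ^ n * b + 2 ^ k * 2 ^ n) := by
      have : (2 : ℝ) ^ n * k ≤ 2 ^ n * k * Real.logb 2 b :=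
        le_mul_of_one_le_right (by positivity) hlog
      linarith
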